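/- arXiv:1305.5472 — 4 statements merged into one kernel-verified Lean document; each statement's English description precedes it below -/
import Mathlib

section
/- Let G be a group acting by isometries on a metric space X with basepoint p, and let (Xₙ) be a random walk on G (Xₙ = g₁⋯gₙ with i.i.d. increments) which makes linear progress: there is C₀ ≥ 1 with ℙ[d(p, Xₙp) ≤ n/C₀] ≤ C₀ e^{-n/C₀} for all n. Then for every k ≥ 1 and every p ∈ X there exists C₃ such that for all n ≥ 1: ℙ[∃ i, j ≤ n with |i−j| ≥ C₃ log n and d(Xᵢp, Xⱼp) ≤ |i−j|/C₃] ≤ C₃ n^{-k}. -/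
/-!
For `i ≤ j` the law of `d(Xᵢp, Xⱼp)` is that of `d(p, X_{j-i}p)`, so once `j - i ≥ C₃ log n`
with `C₃ = (k + 4) C₀`, linear progress bounds the probability of `d(Xᵢp, Xⱼp) ≤ (j - i)/C₃`
by `C₀ e^{-(j-i)/C₀} ≤ C₀ n^{-(k+4)}`. A union bound over the `(n + 1)² ≤ 4n²` pairs of times
leaves `4 C₀ n^{-(k+2)} ≤ C₃ n^{-k}`.
-/

open MeasureTheory

lemma Real.exp_neg_div_le_rpow_neg {x C m a : ℝ} (hx : 0 < x) (hC : 0 < C)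
    (h : a * C * Real.log x ≤ m) : Real.exp (-m / C) ≤ x ^ (-a) := by
  rw [Real.rpow_def_of_pos hx, Real.exp_le_exp, neg_div, mul_neg, neg_le_neg_iff,
    le_div_iff₀ hC]
  linarith

lemma add_one_sq_mul_rpow_neg_le {x : ℝ} (hx : 1 ≤ x) (a : ℝ) :
    (x + 1) ^ 2 * x ^ (-(a + 2)) ≤ 4 * x ^ (-a) := by
  have hx0 : 0 < x := one_pos.trans_le hx
  have hsplit : x ^ (-a) = x ^ 2 * x ^ (-(a + 2)) := by
    rw [← Real.rpow_natCast, ← Real.rpow_add hx0]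
    norm_num
  rw [hsplit, ← mul_assoc]
  gcongr
  nlinarith

lemma measure_exists_pair_le {Ω : Type*} [MeasurableSpace Ω] (μ : Measure Ω)
    (P : ℕ → ℕ → Ω → Prop) {ε : ENNReal} (h : ∀ i j, μ {ω | P i j ω} ≤ ε) (n : ℕ) :
    μ {ω | ∃ i ≤ n, ∃ j ≤ n, P i j ω} ≤ (n + 1) ^ 2 * ε := by
  have hcover : {ω | ∃ i ≤ n, ∃ j ≤ n, P i j ω} =
      ⋃ q ∈ Finset.Iic n ×ˢ Finset.Iic n, {ω | P q.1 q.2 ω} := by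
    ext ω
    simp only [Set.mem_ofPred_eq, Set.mem_iUnion, Finset.mem_product, Finset.mem_Iic,
      exists_prop, Prod.exists]
    exact ⟨fun ⟨i, hi, j, hj, hP⟩ => ⟨i, j, ⟨hi, hj⟩, hP⟩,
      fun ⟨i, j, ⟨hi, hj⟩, hP⟩ => ⟨i, hi, j, hj, hP⟩⟩
  calc μ {ω | ∃ i ≤ n, ∃ j ≤ n, P i j ω}
      ≤ ∑ q ∈ Finset.Iic n ×ˢ Finset.Iic n, μ {ω | P q.1 q.2 ω} :=
        hcover ▸ measure_biUnion_finset_le _ _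
    _ ≤ ∑ _q ∈ Finset.Iic n ×ˢ Finset.Iic n, ε := Finset.sum_le_sum fun q _ => h q.1 q.2
    _ = (n + 1) ^ 2 * ε := by simp [sq]

section LinearProgress

variable {G X Ω : Type*} [Group G] [MetricSpace X] [MulAction G X] [MeasurableSpace Ω]
  {ℙ : Measure Ω} {Xw : ℕ → Ω → G} {p : X} {C₀ : ℝ}

lemma measure_dist_le_div_le_of_linearProgress
    (hstat : ∀ i j : ℕ, i ≤ j → ∀ t : ℝ,
      ℙ {ω | dist (Xw i ω • p) (Xw j ω • p) ≤ t} = ℙ {ω | dist p (Xw (j - i) ω • p) ≤ t})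
    (hlin : ∀ m : ℕ, ℙ {ω | dist p (Xw m ω • p) ≤ (m : ℝ) / C₀} ≤
      ENNReal.ofReal (C₀ * Real.exp (-(m : ℝ) / C₀)))
    {C : ℝ} (hC₀ : 0 < C₀) (hC : C₀ ≤ C) {i j : ℕ} (hij : i ≤ j) :
    ℙ {ω | dist (Xw i ω • p) (Xw j ω • p) ≤ ((j - i : ℕ) : ℝ) / C} ≤
      ENNReal.ofReal (C₀ * Real.exp (-((j - i : ℕ) : ℝ) / C₀)) :=
  calc ℙ {ω | dist (Xw i ω • p) (Xw j ω • p) ≤ ((j - i : ℕ) : ℝ) / C}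
      ≤ ℙ {ω | dist (Xw i ω • p) (Xw j ω • p) ≤ ((j - i : ℕ) : ℝ) / C₀} :=
        measure_mono fun _ hω =>
          le_trans hω (div_le_div_of_nonneg_left (Nat.cast_nonneg _) hC₀ hC)
    _ = ℙ {ω | dist p (Xw (j - i) ω • p) ≤ ((j - i : ℕ) : ℝ) / C₀} := hstat i j hij _
    _ ≤ _ := hlin (j - i)

lemma measure_pair_slow_le_rpow_neg
    (hstat : ∀ i j : ℕ, i ≤ j → ∀ t : ℝ,
      ℙ {ω | dist (Xw i ω • p) (Xw j ω • p) ≤ t} = ℙ {ω | dist p (Xw (j - i) ω • p) ≤ t})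
    (hlin : ∀ m : ℕ, ℙ {ω | dist p (Xw m ω • p) ≤ (m : ℝ) / C₀} ≤
      ENNReal.ofReal (C₀ * Real.exp (-(m : ℝ) / C₀)))
    (hC₀ : 0 < C₀) {a : ℝ} (ha : 1 ≤ a) {n : ℕ} (hn : 1 ≤ n) (i j : ℕ) :
    ℙ {ω | a * C₀ * Real.log n ≤ |(i : ℝ) - (j : ℝ)| ∧
        dist (Xw i ω • p) (Xw j ω • p) ≤ |(i : ℝ) - (j : ℝ)| / (a * C₀)} ≤
      ENNReal.ofReal (C₀ * (n : ℝ) ^ (-a)) := by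
  wlog hij : i ≤ j generalizing i j
  · simpa only [abs_sub_comm, dist_comm] using this j i (le_of_not_ge hij)
  have hgap : |(i : ℝ) - (j : ℝ)| = ((j - i : ℕ) : ℝ) := by
    rw [abs_sub_comm, abs_of_nonneg (sub_nonneg.2 (Nat.cast_le.2 hij)), Nat.cast_sub hij]
  simp only [hgap]
  by_cases hfar : a * C₀ * Real.log n ≤ ((j - i : ℕ) : ℝ)
  · calc _ ≤ ℙ {ω | dist (Xw i ω • p) (Xw j ω • p) ≤ ((j - i : ℕ) : ℝ) / (a * C₀)} :=
          measure_mono fun _ hω => hω.2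
      _ ≤ ENNReal.ofReal (C₀ * Real.exp (-((j - i : ℕ) : ℝ) / C₀)) :=
          measure_dist_le_div_le_of_linearProgress hstat hlin hC₀ (le_mul_of_one_le_left hC₀.le ha)
            hij
      _ ≤ _ := by
          gcongr
          exact Real.exp_neg_div_le_rpow_neg (by exact_mod_cast hn) hC₀ hfar
  · simp [hfar]

end LinearProgress

theorem stmt3_general {G X Ω : Type*} [Group G] [MetricSpace X] [MulAction G X]
    [MeasureSpace Ω] (ℙ : Measure Ω)
    (Xw : ℕ → Ω → G) (p : X)
    -- stationarity of increments: the law of `d(Xᵢ p, Xⱼ p)` equals the law of `d(p, X_{j-i} p)`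
    (hstat : ∀ i j : ℕ, i ≤ j → ∀ t : ℝ,
      ℙ {ω | dist (Xw i ω • p) (Xw j ω • p) ≤ t} = ℙ {ω | dist p (Xw (j - i) ω • p) ≤ t})
    -- linear progress
    (C₀ : ℝ) (hC₀ : 1 ≤ C₀)
    (hlin : ∀ m : ℕ, ℙ {ω | dist p (Xw m ω • p) ≤ (m : ℝ) / C₀} ≤
      ENNReal.ofReal (C₀ * Real.exp (-(m : ℝ) / C₀)))
    (k : ℕ) :
    ∃ C₃ : ℝ, 0 < C₃ ∧ ∀ n : ℕ, 1 ≤ n →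
      ℙ {ω | ∃ i ≤ n, ∃ j ≤ n, C₃ * Real.log n ≤ |(i : ℝ) - (j : ℝ)| ∧
          dist (Xw i ω • p) (Xw j ω • p) ≤ |(i : ℝ) - (j : ℝ)| / C₃} ≤
        ENNReal.ofReal (C₃ * (n : ℝ) ^ (-(k : ℝ))) := by
  have hC₀pos : 0 < C₀ := one_pos.trans_le hC₀
  have hk : (4 : ℝ) ≤ k + 4 := by linarith [k.cast_nonneg (α := ℝ)]
  refine ⟨((k : ℝ) + 4) * C₀, by positivity, fun n hn => ?_⟩
  have hn' : (1 : ℝ) ≤ n := by exact_mod_cast hn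
  have hpairs : ((n : ℝ) + 1) ^ 2 * (C₀ * (n : ℝ) ^ (-((k : ℝ) + 4))) ≤
      ((k : ℝ) + 4) * C₀ * (n : ℝ) ^ (-(k : ℝ)) :=
    calc ((n : ℝ) + 1) ^ 2 * (C₀ * (n : ℝ) ^ (-((k : ℝ) + 4)))
        = C₀ * (((n : ℝ) + 1) ^ 2 * (n : ℝ) ^ (-(((k : ℝ) + 2) + 2))) := by ring_nf
      _ ≤ C₀ * (4 * (n : ℝ) ^ (-((k : ℝ) + 2))) :=
          mul_le_mul_of_nonneg_left (add_one_sq_mul_rpow_neg_le hn' _) hC₀pos.le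
      _ ≤ C₀ * (((k : ℝ) + 4) * (n : ℝ) ^ (-(k : ℝ))) := by
          have hdecay : (n : ℝ) ^ (-((k : ℝ) + 2)) ≤ (n : ℝ) ^ (-(k : ℝ)) :=
            Real.rpow_le_rpow_of_exponent_le hn' (by linarith)
          gcongr
      _ = _ := by ring
  calc _ ≤ ((n : ENNReal) + 1) ^ 2 * ENNReal.ofReal (C₀ * (n : ℝ) ^ (-((k : ℝ) + 4))) :=
        measure_exists_pair_le ℙ _
          (measure_pair_slow_le_rpow_neg hstat hlin hC₀pos (by linarith) hn) n
    _ = ENNReal.ofReal (((n : ℝ) + 1) ^ 2 * (C₀ * (n : ℝ) ^ (-((k : ℝ) + 4)))) := by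
        rw [ENNReal.ofReal_mul (by positivity : (0 : ℝ) ≤ ((n : ℝ) + 1) ^ 2),
          ENNReal.ofReal_pow (by positivity), ENNReal.ofReal_add (by positivity) zero_le_one,
          ENNReal.ofReal_natCast, ENNReal.ofReal_one]
    _ ≤ _ := ENNReal.ofReal_le_ofReal hpairs

/-- a random walk making linear progress admits, for every `k ≥ 1`, a constant
`C₃` such that the probability that some pair of times `i, j ≤ n` with `|i−j| ≥ C₃ log n`
satisfies `d(Xᵢp, Xⱼp) ≤ |i−j|/C₃` is at most `C₃ n^{-k}`. -/
theorem stmt3 {G X Ω : Type*} [Group G] [MetricSpace X] [MulAction G X]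
    [MeasureSpace Ω] (ℙ : Measure Ω) [IsProbabilityMeasure ℙ]
    (Xw : ℕ → Ω → G) (p : X)
    -- stationarity of increments: the law of `d(Xᵢ p, Xⱼ p)` equals the law of `d(p, X_{j-i} p)`
    (hstat : ∀ i j : ℕ, i ≤ j → ∀ t : ℝ,
      ℙ {ω | dist (Xw i ω • p) (Xw j ω • p) ≤ t} = ℙ {ω | dist p (Xw (j - i) ω • p) ≤ t})
    -- linear progress
    (C₀ : ℝ) (hC₀ : 1 ≤ C₀)
    (hlin : ∀ m : ℕ, ℙ {ω | dist p (Xw m ω • p) ≤ (m : ℝ) / C₀} ≤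
      ENNReal.ofReal (C₀ * Real.exp (-(m : ℝ) / C₀)))
    (k : ℕ) (hk : 1 ≤ k) :
    ∃ C₃ : ℝ, 0 < C₃ ∧ ∀ n : ℕ, 1 ≤ n →
      ℙ {ω | ∃ i ≤ n, ∃ j ≤ n, C₃ * Real.log n ≤ |(i : ℝ) - (j : ℝ)| ∧
          dist (Xw i ω • p) (Xw j ω • p) ≤ |(i : ℝ) - (j : ℝ)| / C₃} ≤
        ENNReal.ofReal (C₃ * (n : ℝ) ^ (-(k : ℝ))) :=
  stmt3_general ℙ Xw p hstat C₀ hC₀ hlin k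
end

section
/- Let X be a geodesic space hyperbolic relative to a collection 𝒫 of peripheral subsets, with coarse closest point projections π_P satisfying: (i) diam(π_P(Q)) ≤ C for distinct P, Q ∈ 𝒫, and (ii) if d(π_P(x), π_P(y)) ≥ C then every geodesic [x,y] passes within C of both π_P(x) and π_P(y). Then there exists B such that for all distinct P, Q ∈ 𝒫 and all x ∈ X: min{ d(π_P(x), π_P(Q)), d(π_Q(x), π_Q(P)) } ≤ B. -/
/-- `f` parametrizes a geodesic segment from `x` to `y` (by arclength on `[0, dist x y]`). -/
def IsGeodesicSegment {X : Type*} [MetricSpace X] (f : ℝ → X) (x y : X) : Prop :=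
  f 0 = x ∧ f (dist x y) = y ∧
    ∀ s ∈ Set.Icc (0:ℝ) (dist x y), ∀ t ∈ Set.Icc (0:ℝ) (dist x y),
      dist (f s) (f t) = |s - t|

/-!
Let `p = π_P x` and `q = π_Q x`. If both projection distances in the minimum are at least `C`,
property (ii) puts `p` within `C` of a geodesic `[x, q]` and `q` within `C` of a geodesic
`[p, x]`. Each of these detours costs at most `2C` in the triangle inequality, and adding the two
gives `d(p, q) ≤ 2C`. Since `p ∈ P` is then close to `q`, the coarse closest point `π_P q` is
within `2 d(p, q) + 1 ≤ 4C + 1` of `p`.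
-/

section GeodesicSegment

open Metric Set

variable {X : Type*} [MetricSpace X]

theorem IsGeodesicSegment.dist_add_dist_eq {f : ℝ → X} {x y : X} (hf : IsGeodesicSegment f x y)
    {t : ℝ} (ht : t ∈ Icc 0 (dist x y)) : dist x (f t) + dist (f t) y = dist x y := by
  obtain ⟨hx, hy, hiso⟩ := hf
  have hxt := hiso 0 ⟨le_rfl, dist_nonneg⟩ t ht
  have hty := hiso t ht (dist x y) ⟨dist_nonneg, le_rfl⟩
  rw [hx] at hxt
  rw [hy] at hty
  rw [hxt, hty, abs_of_nonpos (by linarith [ht.1]), abs_of_nonpos (by linarith [ht.2])]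
  ring

theorem IsGeodesicSegment.dist_add_dist_le_of_infDist_le {f : ℝ → X} {x y z : X} {r : ℝ}
    (hf : IsGeodesicSegment f x y) (hz : infDist z (f '' Icc 0 (dist x y)) ≤ r) :
    dist x z + dist z y ≤ dist x y + 2 * r := by
  refine le_of_forall_pos_lt_add fun ε hε => ?_
  have hne : (f '' Icc 0 (dist x y)).Nonempty := (nonempty_Icc.2 dist_nonneg).image f
  obtain ⟨_, ⟨t, ht, rfl⟩, hzt⟩ := (infDist_lt_iff hne).1 (hz.trans_lt (lt_add_of_pos_right r
    (half_pos hε)))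
  calc dist x z + dist z y ≤ (dist x (f t) + dist (f t) z) + (dist z (f t) + dist (f t) y) :=
        add_le_add (dist_triangle _ _ _) (dist_triangle _ _ _)
    _ = dist x y + 2 * dist z (f t) := by rw [← hf.dist_add_dist_eq ht, dist_comm (f t) z]; ring
    _ < dist x y + 2 * r + ε := by linarith

theorem dist_le_two_mul_of_infDist_geodesicSegments_le {f g : ℝ → X} {x p q : X} {r : ℝ}
    (hf : IsGeodesicSegment f x q) (hg : IsGeodesicSegment g p x)
    (hp : infDist p (f '' Icc 0 (dist x q)) ≤ r) (hq : infDist q (g '' Icc 0 (dist p x)) ≤ r) :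
    dist p q ≤ 2 * r := by
  have hxpq := hf.dist_add_dist_le_of_infDist_le hp
  have hpqx := hg.dist_add_dist_le_of_infDist_le hq
  linarith [dist_comm x p, dist_comm x q, dist_comm p q]

theorem dist_le_two_mul_dist_add_one_of_dist_le_infDist_add_one {P : Set X} {a y p : X}
    (ha : a ∈ P) (hp : dist y p ≤ infDist y P + 1) : dist a p ≤ 2 * dist a y + 1 := by
  have hyP : infDist y P ≤ dist a y := dist_comm a y ▸ infDist_le_dist_of_mem ha
  linarith [dist_triangle a y p]

end GeodesicSegment

theorem stmt6_general {X : Type*} [MetricSpace X]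
    (geo : ∀ x y : X, ∃ f : ℝ → X, IsGeodesicSegment f x y)
    (Ps : Set (Set X)) (π : Set X → X → X)
    -- coarse closest point projections
    (hproj : ∀ P ∈ Ps, ∀ x : X, π P x ∈ P ∧ dist x (π P x) ≤ Metric.infDist x P + 1)
    (C : ℝ)
    -- (ii) far projections force geodesics to pass close to both projection points
    (hii : ∀ x y : X, ∀ P ∈ Ps, C ≤ dist (π P x) (π P y) →
      ∀ f : ℝ → X, IsGeodesicSegment f x y →
        Metric.infDist (π P x) (f '' Set.Icc (0:ℝ) (dist x y)) ≤ C ∧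
        Metric.infDist (π P y) (f '' Set.Icc (0:ℝ) (dist x y)) ≤ C) :
    ∃ B : ℝ, ∀ P ∈ Ps, ∀ Q ∈ Ps, P ≠ Q → ∀ x : X,
      min (Metric.infDist (π P x) (π P '' Q)) (Metric.infDist (π Q x) (π Q '' P)) ≤ B := by
  refine ⟨max C (4 * C + 1), fun P hP Q hQ _ x => ?_⟩
  set p := π P x
  set q := π Q x
  have hpQ : Metric.infDist p (π P '' Q) ≤ dist p (π P q) :=
    Metric.infDist_le_dist_of_mem (Set.mem_image_of_mem _ (hproj Q hQ x).1)
  have hqP : Metric.infDist q (π Q '' P) ≤ dist q (π Q p) :=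
    Metric.infDist_le_dist_of_mem (Set.mem_image_of_mem _ (hproj P hP x).1)
  by_cases hfar : C ≤ dist p (π P q) ∧ C ≤ dist q (π Q p)
  · obtain ⟨f, hf⟩ := geo x q
    obtain ⟨g, hg⟩ := geo p x
    have hpq : dist p q ≤ 2 * C := dist_le_two_mul_of_infDist_geodesicSegments_le hf hg
      (hii x q P hP hfar.1 f hf).1 (hii p x Q hQ (dist_comm q _ ▸ hfar.2) g hg).2
    have hpPq := dist_le_two_mul_dist_add_one_of_dist_le_infDist_add_one (hproj P hP x).1
      (hproj P hP q).2
    exact (min_le_left _ _).trans (le_max_of_le_right (by linarith))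
  · rcases not_and_or.1 hfar with hnear | hnear
    · exact (min_le_left _ _).trans (le_max_of_le_left (hpQ.trans (not_le.1 hnear).le))
    · exact (min_le_right _ _).trans (le_max_of_le_left (hqP.trans (not_le.1 hnear).le))

/-- the Behrstock-type projections estimate for closest point projections onto
peripheral sets of a relatively hyperbolic space. -/
theorem stmt6 {X : Type*} [MetricSpace X]
    (geo : ∀ x y : X, ∃ f : ℝ → X, IsGeodesicSegment f x y)
    (Ps : Set (Set X)) (π : Set X → X → X)
    -- coarse closest point projections
    (hproj : ∀ P ∈ Ps, ∀ x : X, π P x ∈ P ∧ dist x (π P x) ≤ Metric.infDist x P + 1)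
    (C : ℝ) (hC : 0 < C)
    -- (i) bounded projections of one peripheral set onto another
    (hi : ∀ P ∈ Ps, ∀ Q ∈ Ps, P ≠ Q → Metric.diam (π P '' Q) ≤ C)
    -- (ii) far projections force geodesics to pass close to both projection points
    (hii : ∀ x y : X, ∀ P ∈ Ps, C ≤ dist (π P x) (π P y) →
      ∀ f : ℝ → X, IsGeodesicSegment f x y →
        Metric.infDist (π P x) (f '' Set.Icc (0:ℝ) (dist x y)) ≤ C ∧
        Metric.infDist (π P y) (f '' Set.Icc (0:ℝ) (dist x y)) ≤ C) :
    ∃ B : ℝ, ∀ P ∈ Ps, ∀ Q ∈ Ps, P ≠ Q → ∀ x : X,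
      min (Metric.infDist (π P x) (π P '' Q)) (Metric.infDist (π Q x) (π Q '' P)) ≤ B :=
  stmt6_general geo Ps π hproj C hii
end

section
/- Let q ≥ 0 and r ∈ (0,1) with q_{l+K'} ≤ K'(q_{l−K'} − q_{l+K'}) for all l ≥ 2K', where q is non-increasing on ℝ≥0 with values in [0,1]. Then for every t ≥ K', q_t ≤ (1 + 1/K')^{-(t−K')/(2K') + 1}. In particular there exists K depending only on K' such that q_t ≤ K e^{-t/K} for all t ≥ 0. -/
/-!
Rearranged, the recursion says `(1 + K') q_{l+K'} ≤ K' q_{l-K'}`, so along the points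
`(2n+1)K'` the function `q` decays by the factor `(1 + 1/K')⁻¹` at each step, starting from
`q_{K'} ≤ 1`. Monotonicity interpolates between consecutive sample points at the cost of one
factor, and on `[0, K']` the trivial bound `q ≤ 1` is absorbed into the constant.
-/

open Real Set

lemma le_inv_pow_of_le_mul_sub_succ {u : ℕ → ℝ} {c : ℝ} (hc : 0 < c) (h0 : u 0 ≤ 1)
    (hu : ∀ n, u (n + 1) ≤ c * (u n - u (n + 1))) (n : ℕ) :
    u n ≤ (1 + 1 / c)⁻¹ ^ n := by
  have hstep : ∀ k, u (k + 1) ≤ (1 + 1 / c)⁻¹ * u k := fun k => by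
    rw [one_add_div hc.ne', inv_div, div_mul_eq_mul_div, le_div_iff₀ (by linarith)]
    linarith [hu k]
  calc u n ≤ (1 + 1 / c)⁻¹ ^ n * u 0 := le_geom (by positivity) n fun k _ => hstep k
    _ ≤ (1 + 1 / c)⁻¹ ^ n := mul_le_of_le_one_right (by positivity) h0

lemma le_rpow_of_antitoneOn_of_le_rpow_natCast {q : ℝ → ℝ} {x a h : ℝ}
    (hq : AntitoneOn q (Ici 0)) (ha : 0 ≤ a) (hh : 0 < h) (hx : 1 ≤ x)
    (hsample : ∀ n : ℕ, q (a + n * h) ≤ x ^ (-(n : ℝ))) {t : ℝ} (ht : a ≤ t) :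
    q t ≤ x ^ (-(t - a) / h + 1) := by
  set n := ⌊(t - a) / h⌋₊
  have hnonneg : 0 ≤ (t - a) / h := div_nonneg (by linarith) hh.le
  have hsample_le : a + n * h ≤ t := by
    have := (le_div_iff₀ hh).1 (Nat.floor_le hnonneg)
    linarith
  have hexp : -(n : ℝ) ≤ -(t - a) / h + 1 := by
    rw [neg_div]
    linarith [Nat.lt_floor_add_one ((t - a) / h)]
  calc q t ≤ q (a + n * h) := hq (by simp only [mem_Ici]; positivity)
        (ha.trans ht) hsample_le
    _ ≤ x ^ (-(n : ℝ)) := hsample n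
    _ ≤ x ^ (-(t - a) / h + 1) := rpow_le_rpow_of_exponent_le hx hexp

lemma rpow_neg_sub_div_add_one {x : ℝ} (hx : 0 < x) (a h t : ℝ) :
    x ^ (-(t - a) / h + 1) = x ^ (1 + a / h) * exp (-(log x / h) * t) := by
  rw [rpow_def_of_pos hx, rpow_def_of_pos hx, ← exp_add]
  congr 1
  ring

lemma le_mul_exp_neg_of_le_one_of_le_mul_exp_neg {q : ℝ → ℝ} {a C l : ℝ} (hl : 0 ≤ l)
    (hle_one : ∀ t ∈ Icc 0 a, q t ≤ 1) (htail : ∀ t, a ≤ t → q t ≤ C * exp (-l * t))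
    {t : ℝ} (ht : 0 ≤ t) :
    q t ≤ max C (exp (l * a)) * exp (-l * t) := by
  rcases le_total t a with hta | hat
  · calc q t ≤ 1 := hle_one t ⟨ht, hta⟩
      _ = exp (l * a) * exp (-l * a) := by rw [← exp_add]; simp
      _ ≤ max C (exp (l * a)) * exp (-l * t) :=
        mul_le_mul (le_max_right _ _) (exp_le_exp.2 (by nlinarith)) (exp_pos _).le
          ((exp_pos _).le.trans (le_max_right _ _))
  · calc q t ≤ C * exp (-l * t) := htail t hat
      _ ≤ max C (exp (l * a)) * exp (-l * t) := by gcongr; exact le_max_left _ _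

lemma exists_mul_exp_neg_le_mul_exp_neg_div {C l : ℝ} (hl : 0 < l) :
    ∃ K : ℝ, 0 < K ∧ ∀ t : ℝ, 0 ≤ t → C * exp (-l * t) ≤ K * exp (-t / K) := by
  set K := max C l⁻¹
  have hK : 0 < K := lt_max_of_lt_right (inv_pos.2 hl)
  refine ⟨K, hK, fun t ht => ?_⟩
  have hinv : K⁻¹ ≤ l := inv_le_of_inv_le₀ hl (le_max_right _ _)
  gcongr
  · exact le_max_left _ _
  · rw [neg_div, div_eq_inv_mul, neg_mul]
    exact neg_le_neg (mul_le_mul_of_nonneg_right hinv ht)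

lemma exists_le_mul_exp_neg_div {q : ℝ → ℝ} {a C l : ℝ} (hl : 0 < l)
    (hle_one : ∀ t ∈ Icc 0 a, q t ≤ 1) (htail : ∀ t, a ≤ t → q t ≤ C * exp (-l * t)) :
    ∃ K : ℝ, 0 < K ∧ ∀ t : ℝ, 0 ≤ t → q t ≤ K * exp (-t / K) := by
  obtain ⟨K, hK, hKbound⟩ := exists_mul_exp_neg_le_mul_exp_neg_div (C := max C (exp (l * a))) hl
  exact ⟨K, hK, fun t ht =>
    (le_mul_exp_neg_of_le_one_of_le_mul_exp_neg hl.le hle_one htail ht).trans (hKbound t ht)⟩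

/-- from the recursion `q_{l+K'} ≤ K'(q_{l−K'} − q_{l+K'})` for a
non-increasing `q : ℝ≥0 → [0,1]`, one gets the interpolated geometric bound
`q_t ≤ (1+1/K')^{-(t−K')/(2K') + 1}` for `t ≥ K'`, and hence an exponential tail bound
`q_t ≤ K e^{-t/K}` with `K` depending only on `K'`. -/
theorem stmt15 (q : ℝ → ℝ) (hmono : ∀ s t : ℝ, 0 ≤ s → s ≤ t → q t ≤ q s)
    (hrange : ∀ t : ℝ, 0 ≤ t → q t ∈ Set.Icc (0:ℝ) 1)
    (K' : ℝ) (hK' : 1 ≤ K')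
    (hrec : ∀ l : ℝ, 2 * K' ≤ l → q (l + K') ≤ K' * (q (l - K') - q (l + K'))) :
    (∀ t : ℝ, K' ≤ t → q t ≤ (1 + 1 / K') ^ (-(t - K') / (2 * K') + 1)) ∧
    ∃ K : ℝ, 0 < K ∧ ∀ t : ℝ, 0 ≤ t → q t ≤ K * Real.exp (-t / K) := by
  have hK'pos : 0 < K' := by linarith
  have hx : 1 < 1 + 1 / K' := by simp [hK'pos]
  have hsample : ∀ n : ℕ, q (K' + n * (2 * K')) ≤ (1 + 1 / K') ^ (-(n : ℝ)) := fun n => by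
    rw [rpow_neg (by positivity), rpow_natCast, ← inv_pow]
    refine le_inv_pow_of_le_mul_sub_succ (u := fun n : ℕ => q (K' + n * (2 * K'))) hK'pos
      (by simpa using (hrange K' hK'pos.le).2) (fun k => ?_) n
    have := hrec (K' + k * (2 * K') + K') (by nlinarith [k.cast_nonneg (α := ℝ)])
    rwa [show K' + k * (2 * K') + K' - K' = K' + k * (2 * K') by ring,
      show K' + k * (2 * K') + K' + K' = K' + ((k + 1 : ℕ) : ℝ) * (2 * K') by push_cast; ring]
      at this
  have hgeom : ∀ t, K' ≤ t → q t ≤ (1 + 1 / K') ^ (-(t - K') / (2 * K') + 1) :=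
    fun t => le_rpow_of_antitoneOn_of_le_rpow_natCast (fun s hs t _ hst => hmono s t hs hst)
      hK'pos.le (by positivity) hx.le hsample
  have hl : 0 < log (1 + 1 / K') / (2 * K') := div_pos (log_pos hx) (by positivity)
  exact ⟨hgeom, exists_le_mul_exp_neg_div hl (fun s hs => (hrange s hs.1).2) fun s hs =>
    (hgeom s hs).trans_eq (rpow_neg_sub_div_add_one (by linarith) _ _ _)⟩
end

section
/- Let X be a geodesic space hyperbolic relative to 𝒫 with transient/deep decomposition satisfying the Relative Rips condition: there exist μ, R, D such that for all x, y, z ∈ X, trans([x,y]) ⊆ N_D(trans([x,z]) ∪ trans([z,y])). Then for every discrete path α = (a₀, …, a_m) from x to y with consecutive points at distance ≤ 1, and every p ∈ trans([x,y]), we have d(p, α) ≤ C₁ log₂(m + 1) + C₁, where C₁ depends only on D. -/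
/-!
Bisection: applying the Relative Rips condition to the midpoint `z = a k` of the path moves a
transient point `p` of `[x,y]` by at most `D` onto a transient point of `[x,z]` or `[z,y]`, and each
of these geodesics is joined by a subpath of about half the length. After `log₂ m` halvings the
path has length at most one, where the geodesic property bounds the distance directly. The
constant comes from `⌈m/2⌉ + 1 ≤ (5/6)(m + 1)` for `m ≥ 2`.
-/

open Metric

section

variable {X : Type*} [MetricSpace X]

def IsTransDistBound (trans : X → X → Set X) (n : ℕ) (r : ℝ) : Prop :=
  ∀ (a : ℕ → X) (x y : X), a 0 = x → a n = y → (∀ i < n, dist (a i) (a (i + 1)) ≤ 1) →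
    ∀ p ∈ trans x y, infDist p (a '' {i | i ≤ n}) ≤ r

namespace IsTransDistBound

variable {trans : X → X → Set X}

theorem mono {n : ℕ} {r r' : ℝ} (h : IsTransDistBound trans n r) (hr : r ≤ r') :
    IsTransDistBound trans n r' :=
  fun a x y hx hy hstep p hp => (h a x y hx hy hstep p hp).trans hr

theorem of_geodesic (hgeo : ∀ x y : X, ∀ p ∈ trans x y, dist x p + dist p y = dist x y)
    (n : ℕ) : IsTransDistBound trans n n := by
  intro a x y hx hy hstep p hp
  have hxy : dist x y ≤ n := calc
    dist x y ≤ ∑ i ∈ Finset.range n, dist (a i) (a (i + 1)) := hx ▸ hy ▸ dist_le_range_sum_dist a n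
    _ ≤ ∑ _i ∈ Finset.range n, (1 : ℝ) :=
      Finset.sum_le_sum fun i hi => hstep i (Finset.mem_range.mp hi)
    _ = n := by simp
  calc infDist p (a '' {i | i ≤ n}) ≤ dist p x := infDist_le_dist_of_mem ⟨0, Nat.zero_le n, hx⟩
    _ ≤ dist x y := by rw [dist_comm]; linarith [hgeo x y p hp, dist_nonneg (x := p) (y := y)]
    _ ≤ n := hxy

theorem add {D : ℝ}
    (hrips : ∀ x y z : X, ∀ p ∈ trans x y, ∃ p' ∈ trans x z ∪ trans z y, dist p p' ≤ D)
    {n₁ n₂ : ℕ} {r : ℝ} (h₁ : IsTransDistBound trans n₁ r) (h₂ : IsTransDistBound trans n₂ r) :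
    IsTransDistBound trans (n₁ + n₂) (r + D) := by
  intro a x y hx hy hstep p hp
  obtain ⟨p', hp', hpp'⟩ := hrips x y (a n₁) p hp
  have hnear : ∃ S ⊆ a '' {i | i ≤ n₁ + n₂}, S.Nonempty ∧ infDist p' S ≤ r := by
    rcases hp' with hp' | hp'
    · refine ⟨a '' {i | i ≤ n₁}, Set.image_mono fun _ hi => Nat.le_add_right_of_le hi,
        ⟨a 0, 0, Nat.zero_le _, rfl⟩, h₁ a x _ hx rfl (fun i hi => hstep i (by omega)) p' hp'⟩
    · refine ⟨(fun i => a (n₁ + i)) '' {i | i ≤ n₂}, ?_, ⟨a n₁, 0, Nat.zero_le _, rfl⟩,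
        h₂ _ _ y rfl hy (fun i hi => hstep (n₁ + i) (by omega)) p' hp'⟩
      rintro _ ⟨i, hi, rfl⟩
      exact ⟨n₁ + i, Nat.add_le_add_left hi n₁, rfl⟩
  obtain ⟨S, hS, hSne, hp'S⟩ := hnear
  calc infDist p (a '' {i | i ≤ n₁ + n₂}) ≤ infDist p S := infDist_le_infDist_of_subset hS hSne
    _ ≤ infDist p' S + dist p p' := infDist_le_infDist_add_dist
    _ ≤ r + D := add_le_add hp'S hpp'

theorem of_bisection (hgeo : ∀ x y : X, ∀ p ∈ trans x y, dist x p + dist p y = dist x y)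
    {D : ℝ}
    (hrips : ∀ x y z : X, ∀ p ∈ trans x y, ∃ p' ∈ trans x z ∪ trans z y, dist p p' ≤ D)
    {g : ℕ → ℝ} (hg : Monotone g) (hbase : ∀ m : ℕ, m ≤ 1 → (m : ℝ) ≤ g m)
    (hhalf : ∀ m, 2 ≤ m → g ((m + 1) / 2) + D ≤ g m) (m : ℕ) :
    IsTransDistBound trans m (g m) := by
  induction m using Nat.strong_induction_on with
  | _ m ih =>
    rcases Nat.lt_or_ge m 2 with hm | hm
    · exact (of_geodesic hgeo m).mono (hbase m (by omega))
    · set k := (m + 1) / 2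
      have hsplit : k + (m - k) = m := by omega
      have hfirst := ih k (by omega)
      have hsecond := (ih (m - k) (by omega)).mono (hg (by omega : m - k ≤ k))
      have hbisect := (hfirst.add hrips hsecond).mono (hhalf m hm)
      rwa [hsplit] at hbisect

end IsTransDistBound

end

theorem logb_two_half_add_one_add_le {m : ℕ} (hm : 2 ≤ m) :
    Real.logb 2 (((m + 1) / 2 : ℕ) + 1) + Real.logb 2 (6 / 5) ≤ Real.logb 2 (m + 1) := by
  have hnat : 6 * ((m + 1) / 2 + 1) ≤ 5 * (m + 1) := by omega
  have hreal : ((((m + 1) / 2 : ℕ) : ℝ) + 1) * (6 / 5) ≤ m + 1 := by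
    have : (6 : ℝ) * ((((m + 1) / 2 : ℕ) : ℝ) + 1) ≤ 5 * (m + 1) := by exact_mod_cast hnat
    linarith
  rw [← Real.logb_mul (by positivity) (by norm_num)]
  exact Real.logb_le_logb_of_le (by norm_num) (by positivity) hreal

/-- Lemma `div`. Under the Relative Rips condition for transient sets,
every transient point of a geodesic `[x,y]` is within `C₁ log₂(m+1) + C₁` of any discrete
path `a₀, …, a_m` from `x` to `y` with unit-speed steps, where `C₁` depends only on `D`. -/
theorem stmt16 {X : Type*} [MetricSpace X]
    (trans : X → X → Set X)
    -- transient points lie on a geodesic between the endpoints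
    (hgeo : ∀ x y : X, ∀ p ∈ trans x y, dist x p + dist p y = dist x y)
    (D : ℝ) (hD : 0 ≤ D)
    -- Relative Rips condition
    (hrips : ∀ x y z : X, ∀ p ∈ trans x y,
      ∃ p' ∈ trans x z ∪ trans z y, dist p p' ≤ D) :
    ∃ C₁ : ℝ, 0 < C₁ ∧ ∀ (m : ℕ) (a : ℕ → X) (x y : X),
      a 0 = x → a m = y → (∀ i < m, dist (a i) (a (i + 1)) ≤ 1) →
      ∀ p ∈ trans x y,
        Metric.infDist p (a '' {i : ℕ | i ≤ m}) ≤ C₁ * Real.logb 2 (m + 1) + C₁ := by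
  set L := Real.logb 2 (6 / 5)
  have hL : 0 < L := Real.logb_pos (by norm_num) (by norm_num)
  set C := 1 + D / L
  have hCL : C * L = L + D := by rw [add_mul, div_mul_cancel₀ D hL.ne', one_mul]
  have hC : 1 ≤ C := le_add_of_nonneg_right (div_nonneg hD hL.le)
  have hlog_nonneg (m : ℕ) : 0 ≤ Real.logb 2 (m + 1) :=
    Real.logb_nonneg one_lt_two (by simp)
  refine ⟨C, by linarith, fun m => IsTransDistBound.of_bisection hgeo hrips
    (g := fun m : ℕ => C * Real.logb 2 (m + 1) + C) ?_ ?_ ?_ m⟩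
  · intro i j hij
    have : Real.logb 2 (i + 1) ≤ Real.logb 2 (j + 1) :=
      Real.logb_le_logb_of_le one_lt_two (by positivity) (by simpa using hij)
    dsimp only
    gcongr
  · intro m hm
    have : (m : ℝ) ≤ 1 := by exact_mod_cast hm
    nlinarith [hlog_nonneg m]
  · intro m hm
    nlinarith [logb_two_half_add_one_add_le hm]
end
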